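/- Let c ≥ 1 be an integer, k an odd positive integer, ζ a primitive 2c-th root of unity, and a ∈ ℤ[ζ]. If n ≥ kc, then Φ_{kc}(q) divides ∑_{m=0}^{n} ζ^m a · binom(n,m)_q in ℤ[ζ][q]. -/

import Mathlib

open Polynomial Finset

/-- The Gaussian (q-)binomial coefficient as a polynomial, satisfying the
product formula `∏_{i=n-m+1}^{n}(1-q^i) / ∏_{i=1}^{m}(1-q^i)`. -/
noncomputable def qbinom (R : Type*) [CommRing R] : ℕ → ℕ → Polynomial R
  | _, 0 => 1
  | 0, _+1 => 0
  | n+1, m+1 => qbinom R n (m+1) + X ^ (n - m) * qbinom R n m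

/-- The subring ℤ[ζ] of ℂ. -/
noncomputable abbrev Zadj (ζ : ℂ) : Type := Algebra.adjoin ℤ ({ζ} : Set ℂ)

/-- ζ as an element of ℤ[ζ]. -/
noncomputable def zeta (ζ : ℂ) : Zadj ζ := ⟨ζ, Algebra.self_mem_adjoin_singleton ℤ ζ⟩

/-!
After pulling out `a` and embedding `ℤ[ζ]` into `ℂ`, it suffices that every primitive `d`-th root
of unity `ω`, `d = kc`, is a root of the Rogers–Szegő polynomial `H_n(t; q) = ∑_m [n, m]_q t^m`
at `t = ζ`; note `ζ^d = -1` because `ζ^c = -1` and `k` is odd. For `n = d` the coefficients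
`[d, m]_ω` with `0 < m < d` vanish, so `H_d(t; ω) = 1 + t^d = 0`. The q-Pascal rule gives
`H_{n+1}(q s; q) = H_n(q s; q) + q^{n+1} s H_n(s; q)`, and writing `t = ω s` with `s^d = t^d = -1`
propagates the vanishing to all `n ≥ d`.
-/

section QBinom

variable (R : Type*) [CommRing R]

@[simp]
lemma qbinom_zero_right (n : ℕ) : qbinom R n 0 = 1 := by
  cases n <;> rfl

lemma qbinom_succ_succ (n m : ℕ) :
    qbinom R (n + 1) (m + 1) = qbinom R n (m + 1) + X ^ (n - m) * qbinom R n m := rfl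

lemma qbinom_eq_zero_of_lt : ∀ {n m : ℕ}, n < m → qbinom R n m = 0
  | 0, _ + 1, _ => rfl
  | n + 1, m + 1, h => by
    rw [qbinom_succ_succ, qbinom_eq_zero_of_lt (by omega), qbinom_eq_zero_of_lt (by omega),
      mul_zero, add_zero]

@[simp]
lemma qbinom_self : ∀ n : ℕ, qbinom R n n = 1
  | 0 => rfl
  | n + 1 => by
    rw [qbinom_succ_succ, qbinom_eq_zero_of_lt R n.lt_succ_self, qbinom_self n]
    simp

lemma qbinom_add_mul_prod :
    ∀ n m : ℕ, qbinom R (n + m) m * ∏ i ∈ range m, (1 - (X : R[X]) ^ (i + 1)) =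
      ∏ i ∈ range m, (1 - (X : R[X]) ^ (n + 1 + i))
  | n, 0 => by simp
  | 0, m => by simp [add_comm 1]
  | n + 1, m + 1 => by
    have hsucc := qbinom_add_mul_prod n (m + 1)
    have hpred := qbinom_add_mul_prod (n + 1) m
    rw [show n + (m + 1) = n + 1 + m by omega] at hsucc
    rw [show n + 1 + (m + 1) = n + 1 + m + 1 by omega, qbinom_succ_succ,
      show n + 1 + m - m = n + 1 by omega, prod_range_succ _ m, prod_range_succ _ m]
    rw [prod_range_succ (fun i => 1 - (X : R[X]) ^ (i + 1)),
      prod_range_succ' (fun i => 1 - (X : R[X]) ^ (n + 1 + i))] at hsucc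
    have hshift : ∏ i ∈ range m, (1 - (X : R[X]) ^ (n + 1 + (i + 1))) =
        ∏ i ∈ range m, (1 - X ^ (n + 1 + 1 + i)) :=
      prod_congr rfl fun i _ => by rw [add_comm i, ← add_assoc]
    rw [hshift, add_zero] at hsucc
    linear_combination hsucc + X ^ (n + 1) * (1 - X ^ (m + 1)) * hpred
  termination_by n m => n + m

end QBinom

lemma map_qbinom {R S : Type*} [CommRing R] [CommRing S] (f : R →+* S) :
    ∀ n m : ℕ, (qbinom R n m).map f = qbinom S n m
  | n, 0 => by simp
  | 0, _ + 1 => Polynomial.map_zero f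
  | n + 1, m + 1 => by
    rw [qbinom_succ_succ, qbinom_succ_succ, Polynomial.map_add, Polynomial.map_mul,
      Polynomial.map_pow, map_X, map_qbinom f n (m + 1), map_qbinom f n m]

section RogersSzego

variable {R : Type*} [CommRing R]

noncomputable def rogersSzego (n : ℕ) (t q : R) : R :=
  ∑ m ∈ range (n + 1), t ^ m * (qbinom R n m).eval q

lemma rogersSzego_eq_one_add_sum (n : ℕ) (t q : R) :
    rogersSzego n t q = 1 + ∑ m ∈ range (n + 1), t ^ (m + 1) * (qbinom R n (m + 1)).eval q := by
  have hlast : t ^ (n + 1) * (qbinom R n (n + 1)).eval q = 0 := by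
    rw [qbinom_eq_zero_of_lt R n.lt_succ_self, eval_zero, mul_zero]
  rw [← add_zero (rogersSzego n t q), ← hlast, rogersSzego, ← sum_range_succ, sum_range_succ',
    add_comm]
  simp

lemma rogersSzego_succ_mul (n : ℕ) (t q : R) :
    rogersSzego (n + 1) (q * t) q =
      rogersSzego n (q * t) q + q ^ (n + 1) * t * rogersSzego n t q := by
  have hshift : ∀ m ∈ range (n + 1), (q * t) ^ (m + 1) * (X ^ (n - m) * qbinom R n m).eval q =
      q ^ (n + 1) * t * (t ^ m * (qbinom R n m).eval q) := fun m hm => by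
    have hpow : q ^ (n + 1) = q ^ (m + 1) * q ^ (n - m) := by
      rw [← pow_add]; congr 1; have := mem_range.1 hm; omega
    rw [eval_mul, eval_pow, eval_X, hpow]
    ring
  rw [rogersSzego_eq_one_add_sum n (q * t), rogersSzego, sum_range_succ', rogersSzego, mul_sum]
  simp only [qbinom_succ_succ, eval_add, mul_add, sum_add_distrib, sum_congr rfl hshift,
    pow_zero, qbinom_zero_right, eval_one, mul_one]
  ring

end RogersSzego

namespace IsPrimitiveRoot

variable {R : Type*} [CommRing R] [IsDomain R]

lemma pow_eq_neg_one_of_two_mul {ζ : R} {c : ℕ} (hζ : IsPrimitiveRoot ζ (2 * c)) (hc : c ≠ 0) :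
    ζ ^ c = -1 := by
  have h := hζ.pow_of_dvd hc (dvd_mul_left c 2)
  rw [Nat.mul_div_cancel _ (Nat.pos_of_ne_zero hc)] at h
  exact h.eq_neg_one_of_two_right

lemma eval_qbinom_eq_zero {d m : ℕ} {ω : R} (hω : IsPrimitiveRoot ω d) (hm0 : 0 < m)
    (hmd : m < d) : (qbinom R d m).eval ω = 0 := by
  obtain ⟨j, rfl⟩ : ∃ j, d = j + m := ⟨d - m, by omega⟩
  have key := congrArg (eval ω) (qbinom_add_mul_prod R j m)
  simp only [eval_mul, eval_prod, eval_sub, eval_one, eval_pow, eval_X] at key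
  have hdenom : ∏ i ∈ range m, (1 - ω ^ (i + 1)) ≠ 0 :=
    prod_ne_zero_iff.2 fun i hi =>
      sub_ne_zero.2 (hω.pow_ne_one_of_pos_of_lt i.succ_ne_zero (by have := mem_range.1 hi; omega)).symm
  have hnum : ∏ i ∈ range m, (1 - ω ^ (j + 1 + i)) = 0 :=
    prod_eq_zero (mem_range.2 (Nat.sub_lt hm0 one_pos))
      (by rw [show j + 1 + (m - 1) = j + m by omega, hω.pow_eq_one, sub_self])
  exact (mul_eq_zero.1 (key.trans hnum)).resolve_right hdenom

lemma rogersSzego_self {d : ℕ} {ω : R} (hω : IsPrimitiveRoot ω d) (hd : 0 < d) (t : R) :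
    rogersSzego d t ω = 1 + t ^ d := by
  rw [rogersSzego, sum_range_succ, sum_eq_single_of_mem 0 (mem_range.2 hd) fun m hm hm0 => by
    rw [hω.eval_qbinom_eq_zero (Nat.pos_of_ne_zero hm0) (mem_range.1 hm), mul_zero]]
  simp

lemma rogersSzego_eq_zero {d n : ℕ} {ω t : R} (hω : IsPrimitiveRoot ω d) (hd : 0 < d)
    (hn : d ≤ n) (ht : t ^ d = -1) : rogersSzego n t ω = 0 := by
  induction n, hn using Nat.le_induction generalizing t with
  | base => rw [hω.rogersSzego_self hd, ht, add_neg_cancel]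
  | succ n _ ih =>
    set s := ω ^ (d - 1) * t
    have hts : t = ω * s := by
      rw [← mul_assoc, ← pow_succ', Nat.sub_add_cancel hd, hω.pow_eq_one, one_mul]
    have hs : s ^ d = -1 := by
      rw [mul_pow, ← pow_mul, mul_comm (d - 1), pow_mul, hω.pow_eq_one, one_pow, one_mul, ht]
    rw [hts, rogersSzego_succ_mul, ih (hts ▸ ht), ih hs, mul_zero, add_zero]

end IsPrimitiveRoot

lemma cyclotomic_dvd_of_forall_isRoot {K : Type*} [Field K] {d : ℕ} {ω : K}
    (hω : IsPrimitiveRoot ω d) (hd : 0 < d) {p : K[X]}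
    (hp : ∀ μ, IsPrimitiveRoot μ d → p.IsRoot μ) : cyclotomic d K ∣ p := by
  rw [cyclotomic_eq_prod_X_sub_primitiveRoots hω]
  exact prod_dvd_of_coprime ((pairwise_coprime_X_sub_C Function.injective_id).set_pairwise _)
    fun μ hμ => dvd_iff_isRoot.2 (hp μ ((mem_primitiveRoots hd).1 hμ))

lemma IsPrimitiveRoot.cyclotomic_dvd_sum_C_pow_mul_qbinom {K : Type*} [Field K] {d n : ℕ}
    {ω t : K} (hω : IsPrimitiveRoot ω d) (hd : 0 < d) (hn : d ≤ n) (ht : t ^ d = -1) :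
    cyclotomic d K ∣ ∑ m ∈ range (n + 1), C (t ^ m) * qbinom K n m :=
  cyclotomic_dvd_of_forall_isRoot hω hd fun μ hμ => by
    simpa [rogersSzego, eval_finsetSum] using hμ.rogersSzego_eq_zero hd hn ht

theorem first_order_vanishing_const_general (c k : ℕ) (hc : 1 ≤ c) (hk : Odd k)
    (ζ : ℂ) (hζ : IsPrimitiveRoot ζ (2 * c)) (a : Zadj ζ) (n : ℕ) (hn : k * c ≤ n) :
    Polynomial.cyclotomic (k * c) (Zadj ζ) ∣
      ∑ m ∈ Finset.range (n + 1), C (zeta ζ ^ m * a) * qbinom (Zadj ζ) n m := by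
  have hd : 0 < k * c := Nat.mul_pos hk.pos hc
  have hζd : ζ ^ (k * c) = -1 := by
    rw [mul_comm, pow_mul, hζ.pow_eq_neg_one_of_two_mul (by omega), hk.neg_one_pow]
  have hfactor : ∑ m ∈ range (n + 1), C (zeta ζ ^ m * a) * qbinom (Zadj ζ) n m =
      C a * ∑ m ∈ range (n + 1), C (zeta ζ ^ m) * qbinom (Zadj ζ) n m := by
    rw [mul_sum]
    exact sum_congr rfl fun m _ => by rw [C_mul]; ring
  rw [hfactor]
  refine dvd_mul_of_dvd_right ?_ _
  rw [← map_dvd_map (algebraMap (Zadj ζ) ℂ) (FaithfulSMul.algebraMap_injective _ _)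
    (cyclotomic.monic _ _), map_cyclotomic]
  simpa [Polynomial.map_sum, map_qbinom, zeta] using
    (Complex.isPrimitiveRoot_exp _ hd.ne').cyclotomic_dvd_sum_C_pow_mul_qbinom hd hn hζd

theorem first_order_vanishing_const (c k : ℕ) (hc : 1 ≤ c) (hk : Odd k) (hk0 : 0 < k)
    (ζ : ℂ) (hζ : IsPrimitiveRoot ζ (2 * c)) (a : Zadj ζ) (n : ℕ) (hn : k * c ≤ n) :
    Polynomial.cyclotomic (k * c) (Zadj ζ) ∣
      ∑ m ∈ Finset.range (n + 1), C (zeta ζ ^ m * a) * qbinom (Zadj ζ) n m :=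
  first_order_vanishing_const_general c k hc hk ζ hζ a n hn
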